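/- The classes α1, α2, α3 satisfy α1·α1 = α2·α2 = α3·α3 = −4 and αi·αj = 4 for all i ≠ j; consequently the generalized Cartan matrix c_{ij} = 2(αi·αj)/(αi·αi) equals [[2,−2,−2],[−2,2,−2],[−2,−2,2]], which is the symmetric generalized Cartan matrix of the hyperbolic type H71^(3). -/

import Mathlib

/-- The Picard lattice of the space of initial values of the HV equation:
the free ℤ-module of rank 16 with basis `H0, H1, E1, …, E14`. -/
abbrev Pic : Type := Fin 16 → ℤ

/-- The class `H0` (total transform of a line `x = const`). -/
def H0 : Pic := Pi.single 0 1

/-- The class `H1` (total transform of a line `y = const`). -/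
def H1 : Pic := Pi.single 1 1

/-- The exceptional classes: `E k` is the paper's `E_{k+1}` for `k : Fin 14`. -/
def E (k : Fin 14) : Pic := Pi.single k.succ.succ 1

/-- The intersection form: `H0·H1 = 1`, `H0·H0 = H1·H1 = 0`, `Ek·El = -δ`, `Hi·Ek = 0`. -/
def ip (u v : Pic) : ℤ :=
  u 0 * v 1 + u 1 * v 0 - ∑ k : Fin 14, u k.succ.succ * v k.succ.succ

/-- The canonical class `K = -2H0 - 2H1 + E1 + ⋯ + E14`. -/
def KX : Pic := (-2 : ℤ) • H0 + (-2 : ℤ) • H1 + ∑ k : Fin 14, E k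

/-- The classes `D0, …, D12` of the irreducible components of `-K`. -/
def D : Fin 13 → Pic :=
  ![E 0 - E 1, E 1 - E 2, E 2 - E 3,
    E 4 - E 5, E 5 - E 6, E 6 - E 7,
    E 8 - E 9, E 10 - E 11, E 11 - E 12, E 12 - E 13,
    H0 - E 0 - E 1 - E 8, H1 - E 4 - E 5 - E 8, E 9 - E 10 - E 11]

/-- The root basis `α1, α2, α3` of the orthogonal complement of the `D`'s. -/
def α : Fin 3 → Pic :=
  ![(2 : ℤ) • H1 - E 0 - E 1 - E 2 - E 3,
    (2 : ℤ) • H0 - E 4 - E 5 - E 6 - E 7,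
    (2 : ℤ) • H0 + (2 : ℤ) • H1 - (2 : ℤ) • E 8 - (2 : ℤ) • E 9 - E 10 - E 11 - E 12 - E 13]

/-- The ℤ-linear map sending the `j`-th basis vector to `f j`. -/
def ofImages (f : Fin 16 → Pic) : Pic →ₗ[ℤ] Pic :=
  Matrix.toLin' (Matrix.of fun i j => f j i)

/-- The generator `w1`. -/
def w1 : Pic →ₗ[ℤ] Pic := ofImages
  ![H0 + (2 : ℤ) • H1 - E 0 - E 1 - E 2 - E 3, H1,
    H1 - E 3, H1 - E 2, H1 - E 1, H1 - E 0,
    E 4, E 5, E 6, E 7, E 8, E 9, E 10, E 11, E 12, E 13]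

/-- The generator `w2`. -/
def w2 : Pic →ₗ[ℤ] Pic := ofImages
  ![H0, (2 : ℤ) • H0 + H1 - E 4 - E 5 - E 6 - E 7,
    E 0, E 1, E 2, E 3,
    H0 - E 7, H0 - E 6, H0 - E 5, H0 - E 4,
    E 8, E 9, E 10, E 11, E 12, E 13]

/-- The generator `w3`. -/
def w3 : Pic →ₗ[ℤ] Pic := ofImages
  ![H0 + α 2, H1 + α 2,
    E 0, E 1, E 2, E 3, E 4, E 5, E 6, E 7,
    E 8 + α 2, E 9 + α 2,
    E 10 + (H0 + H1 - E 8 - E 9 - E 10 - E 13),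
    E 11 + (H0 + H1 - E 8 - E 9 - E 11 - E 12),
    E 12 + (H0 + H1 - E 8 - E 9 - E 11 - E 12),
    E 13 + (H0 + H1 - E 8 - E 9 - E 10 - E 13)]

/-- The generator `σ12`. -/
def s12 : Pic →ₗ[ℤ] Pic := ofImages
  ![H1, H0, E 4, E 5, E 6, E 7, E 0, E 1, E 2, E 3,
    E 8, E 9, E 10, E 11, E 12, E 13]

/-- The generator `σ13`. -/
def s13 : Pic →ₗ[ℤ] Pic := ofImages
  ![H0, H0 + H1 - E 8 - E 9,
    E 10, E 11, E 12, E 13,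
    E 4, E 5, E 6, E 7,
    H0 - E 9, H0 - E 8,
    E 0, E 1, E 2, E 3]

/-- The action `φ` of the Hietarinta–Viallet equation on the Picard lattice. -/
def phiHV : Pic →ₗ[ℤ] Pic := ofImages
  ![(3 : ℤ) • H0 + H1 - E 4 - E 5 - E 6 - E 7 - E 8 - E 9, H0,
    H0 - E 7, H0 - E 6, H0 - E 5, H0 - E 4,
    E 10, E 11, E 12, E 13,
    H0 - E 9, H0 - E 8,
    E 0, E 1, E 2, E 3]

/-- The symmetric generalized Cartan matrix of the hyperbolic type `H71^(3)`. -/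
def H71Matrix : Matrix (Fin 3) (Fin 3) ℤ := !![2, -2, -2; -2, 2, -2; -2, -2, 2]

/-- A symmetric `3 × 3` generalized Cartan matrix is of hyperbolic type iff it is not
positive semidefinite (indefinite type) while every proper principal submatrix is
positive semidefinite (i.e. of finite or affine type). -/
def IsHyperbolicType (A : Matrix (Fin 3) (Fin 3) ℝ) : Prop :=
  ¬ A.PosSemidef ∧ ∀ i : Fin 3, (A.submatrix i.succAbove i.succAbove).PosSemidef

/-- `α1·α1 = α2·α2 = α3·α3 = -4`, `αi·αj = 4` for `i ≠ j`, and the generalized Cartan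
matrix `c_{ij} = 2(αi·αj)/(αi·αi)` equals `[[2,-2,-2],[-2,2,-2],[-2,-2,2]]`, the
symmetric generalized Cartan matrix of the hyperbolic type `H71^(3)`. -/
lemma psd2 : Matrix.PosSemidef (!![(2:ℝ),-2;-2,2]) := by
  refine Matrix.posSemidef_iff_dotProduct_mulVec.mpr ⟨?_, ?_⟩
  · ext i j
    rw [Matrix.conjTranspose_apply]
    fin_cases i <;> fin_cases j <;> simp
  · intro x
    have h : dotProduct (star x) ((!![(2:ℝ),-2;-2,2]).mulVec x)
        = 2 * (x 0 - x 1)^2 := by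
      simp [Matrix.mulVec, dotProduct, Fin.sum_univ_succ]
      ring
    rw [h]; positivity

theorem cartanMatrix_hyperbolic_H71 :
    (∀ i : Fin 3, ip (α i) (α i) = -4) ∧
    (∀ i j : Fin 3, i ≠ j → ip (α i) (α j) = 4) ∧
    (Matrix.of fun i j : Fin 3 => 2 * ip (α i) (α j) / ip (α i) (α i)) = H71Matrix ∧
    IsHyperbolicType (H71Matrix.map (Int.cast : ℤ → ℝ)) := by
  refine ⟨by decide, by decide, by decide, ?_, ?_⟩
  · intro h
    have h2 := h.dotProduct_mulVec_nonneg ![1, 1, 1]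
    have heq : dotProduct (star ![(1:ℝ), 1, 1])
        ((H71Matrix.map (Int.cast : ℤ → ℝ)).mulVec ![1, 1, 1]) = -6 := by
      simp [Matrix.mulVec, dotProduct, Fin.sum_univ_succ, H71Matrix]
      norm_num
    rw [heq] at h2
    norm_num at h2
  · intro i
    have heq : ((H71Matrix.map (Int.cast : ℤ → ℝ)).submatrix i.succAbove i.succAbove)
        = !![(2:ℝ),-2;-2,2] := by
      fin_cases i <;> (ext a b; fin_cases a <;> fin_cases b <;>
        norm_num [H71Matrix, Fin.succAbove, Fin.lt_def, Matrix.vecHead, Matrix.vecTail]) <;>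
        simp [Matrix.cons_val]
    rw [heq]; exact psd2
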